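/- Let $J_{a+1}$ denote the Bessel function of the first kind of order $a+1\geq 1/2$, with asymptotic expansion $J_{a+1}(w)=\sqrt{2/(\pi w)}\cos(w-(a+1)\pi/2-\pi/4)+O(w^{-3/2})$ as $w\to\infty$. Fix $r>0$ and suppose $d=2a+2\not\equiv 1\pmod 4$ is an integer. Then there exist $c>0$ and $M_0>0$ such that for all $M\geq M_0$, $|J_{a+1}(Mr)|^2 + |J_{a+1}(2Mr)|^2 \geq c/M$. -/

import Mathlib

open Real

lemma aux_min (φ : ℝ) (hpos : ∀ x : ℝ, 0 < Real.cos x ^ 2 + Real.cos (2*x + φ) ^ 2) :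
    ∃ δ : ℝ, 0 < δ ∧ ∀ x : ℝ, δ ≤ Real.cos x ^ 2 + Real.cos (2*x + φ) ^ 2 := by
  set f : ℝ → ℝ := fun x => Real.cos x ^ 2 + Real.cos (2*x + φ) ^ 2 with hf
  have hcont : Continuous f := by fun_prop
  have hper : Function.Periodic f (2*π) := by
    intro x
    have h1 : 2*(x + 2*π) + φ = (2*x + φ) + 2*π + 2*π := by ring
    simp only [hf, h1, Real.cos_add_two_pi]
  obtain ⟨x0, _, hx0⟩ := (isCompact_Icc (a := (0:ℝ)) (b := 2*π)).exists_isMinOn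
    ⟨0, by constructor <;> positivity⟩ hcont.continuousOn
  refine ⟨f x0, hpos x0, fun x => ?_⟩
  have h2π : (0:ℝ) < 2*π := by positivity
  have hy : f (x - ⌊x / (2*π)⌋ * (2*π)) = f x := hper.sub_int_mul_eq _
  have hmem : x - ⌊x / (2*π)⌋ * (2*π) ∈ Set.Icc (0:ℝ) (2*π) :=
    ⟨Int.sub_floor_div_mul_nonneg x h2π, (Int.sub_floor_div_mul_lt x h2π).le⟩
  have h5 : f x0 ≤ f (x - ⌊x / (2*π)⌋ * (2*π)) := hx0 hmem
  rw [hy] at h5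
  exact h5

lemma aux_pos (d : ℤ) (hmod : d % 4 ≠ 1) (φ : ℝ) (hφ : φ = ((d:ℝ) + 1) * π / 4) :
    ∀ x : ℝ, 0 < Real.cos x ^ 2 + Real.cos (2*x + φ) ^ 2 := by
  intro x
  by_contra h
  push_neg at h
  have h1 : Real.cos x ^ 2 = 0 := by nlinarith [sq_nonneg (Real.cos x), sq_nonneg (Real.cos (2*x+φ))]
  have h2 : Real.cos (2*x + φ) ^ 2 = 0 := by nlinarith [sq_nonneg (Real.cos x), sq_nonneg (Real.cos (2*x+φ))]
  rw [pow_eq_zero_iff (by norm_num)] at h1 h2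
  rw [Real.cos_eq_zero_iff] at h1 h2
  obtain ⟨n, hn⟩ := h1
  obtain ⟨m, hm⟩ := h2
  rw [hn, hφ] at hm
  have hπ : π ≠ 0 := Real.pi_ne_zero
  have hdr : (d:ℝ) = 4*m - 8*n - 3 := by
    have h3 : ((d:ℝ) + 1 + (8*n - 4*m + 2)) * π = 0 := by ring_nf; ring_nf at hm; linarith
    have h4 : (d:ℝ) + 1 + (8*n - 4*m + 2) = 0 := by
      rcases mul_eq_zero.mp h3 with h | h
      · exact h
      · exact absurd h hπ
    linarith
  have : d = 4*m - 8*n - 3 := by exact_mod_cast hdr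
  omega

set_option maxHeartbeats 1000000 in
theorem bessel_two_radii_lower_bound (a : ℝ) (d : ℤ) (hd : (d : ℝ) = 2 * a + 2)
    (hmod : d % 4 ≠ 1) (ha : (1 : ℝ) / 2 ≤ a + 1)
    (J : ℝ → ℝ) (CJ W0 : ℝ)
    (hJ : ∀ w : ℝ, W0 ≤ w →
      |J w - Real.sqrt (2 / (π * w)) * Real.cos (w - (a + 1) * π / 2 - π / 4)|
        ≤ CJ * w ^ (-(3 : ℝ) / 2))
    (r : ℝ) (hr : 0 < r) :
    ∃ c M0 : ℝ, 0 < c ∧ 0 < M0 ∧ ∀ M : ℝ, M0 ≤ M →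
      c / M ≤ |J (M * r)| ^ 2 + |J (2 * M * r)| ^ 2 := by
  have hπ : (0:ℝ) < π := Real.pi_pos
  -- CJ is nonnegative
  have hCJ : 0 ≤ CJ := by
    have hw₀pos : (0:ℝ) < max W0 1 := lt_of_lt_of_le one_pos (le_max_right _ _)
    have h := hJ (max W0 1) (le_max_left _ _)
    have hpow : 0 < (max W0 1) ^ (-(3:ℝ)/2) := Real.rpow_pos_of_pos hw₀pos _
    nlinarith [abs_nonneg (J (max W0 1) - Real.sqrt (2/(π*(max W0 1))) *
      Real.cos ((max W0 1) - (a+1)*π/2 - π/4))]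
  -- the phase constant
  set φ : ℝ := (a+1)*π/2 + π/4 with hφ
  have hφd : φ = ((d:ℝ)+1)*π/4 := by
    have h1 : a + 1 = (d:ℝ)/2 := by linarith
    rw [hφ, h1]; ring
  obtain ⟨δ, hδpos, hδ⟩ := aux_min φ (aux_pos d hmod φ hφd)
  set s : ℝ := Real.sqrt (δ/2) with hsdef
  have hs : 0 < s := Real.sqrt_pos.mpr (by linarith)
  have hs2 : s^2 = δ/2 := Real.sq_sqrt (by linarith)
  -- rpow to sqrt conversion
  have hpow : ∀ u : ℝ, 0 < u → u ^ (-(3:ℝ)/2) = 1/(u*Real.sqrt u) := by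
    intro u hu
    rw [show (-(3:ℝ)/2) = -(3/2) by norm_num, Real.rpow_neg hu.le,
      show (3/2:ℝ) = 1 + 1/2 by norm_num, Real.rpow_add hu, Real.rpow_one,
      ← Real.sqrt_eq_rpow, one_div]
  -- key lower bound for |J u|
  have key : ∀ u : ℝ, W0 ≤ u →
      Real.sqrt (2/(π*u)) * |Real.cos (u - (a+1)*π/2 - π/4)| - CJ * u ^ (-(3:ℝ)/2)
        ≤ |J u| := by
    intro u hu
    have h := hJ u hu
    have htri := abs_sub_abs_le_abs_sub
      (Real.sqrt (2/(π*u)) * Real.cos (u - (a+1)*π/2 - π/4)) (J u)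
    rw [abs_mul, abs_of_nonneg (Real.sqrt_nonneg _)] at htri
    have hcomm : |Real.sqrt (2/(π*u)) * Real.cos (u - (a+1)*π/2 - π/4) - J u|
        = |J u - Real.sqrt (2/(π*u)) * Real.cos (u - (a+1)*π/2 - π/4)| := abs_sub_comm _ _
    rw [hcomm] at htri
    linarith
  refine ⟨δ/(8*π*r), max (max ((|W0|+1)/r) ((2*Real.sqrt π*CJ/s + 1)/r)) 1,
    by positivity, lt_of_lt_of_le one_pos (le_max_right _ _), ?_⟩
  intro M hM
  have hM1 : (1:ℝ) ≤ M := le_trans (le_max_right _ _) hM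
  have hMpos : (0:ℝ) < M := by linarith
  have hwpos : 0 < M*r := by positivity
  have hwW0 : W0 ≤ M*r := by
    have h1 : (|W0|+1)/r ≤ M := le_trans (le_trans (le_max_left _ _) (le_max_left _ _)) hM
    have h2 : |W0|+1 ≤ M*r := (div_le_iff₀ hr).mp h1
    have := le_abs_self W0
    linarith
  have h2wW0 : W0 ≤ 2*M*r := by nlinarith
  have hcond : 2*Real.sqrt π*CJ ≤ s*(M*r) := by
    have h1 : (2*Real.sqrt π*CJ/s + 1)/r ≤ M :=
      le_trans (le_trans (le_max_right _ _) (le_max_left _ _)) hM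
    have h2 : 2*Real.sqrt π*CJ/s + 1 ≤ M*r := (div_le_iff₀ hr).mp h1
    have h3 : 2*Real.sqrt π*CJ/s ≤ M*r := by linarith
    calc 2*Real.sqrt π*CJ = (2*Real.sqrt π*CJ/s)*s := by field_simp
      _ ≤ (M*r)*s := mul_le_mul_of_nonneg_right h3 hs.le
      _ = s*(M*r) := mul_comm _ _
  set B : ℝ := Real.sqrt (1/(π*M*r)) with hBdef
  have hB : B = 1/(Real.sqrt π * Real.sqrt (M*r)) := by
    have h1 : (1:ℝ)/(π*M*r) = (π*(M*r))⁻¹ := by rw [one_div]; ring_nf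
    rw [hBdef, h1, Real.sqrt_inv, Real.sqrt_mul hπ.le, one_div]
  have hBsq : B^2 = 1/(π*M*r) := Real.sq_sqrt (by positivity)
  have hBpos : 0 < B := Real.sqrt_pos.mpr (by positivity)
  have hA1 : B ≤ Real.sqrt (2/(π*(M*r))) := by
    apply Real.sqrt_le_sqrt
    rw [div_le_div_iff₀ (by positivity) (by positivity)]
    nlinarith
  have hA2 : Real.sqrt (2/(π*(2*M*r))) = B := by
    rw [hBdef]
    congr 1
    field_simp
  have hE1 : CJ * ((M*r) ^ (-(3:ℝ)/2)) ≤ s/2*B := by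
    rw [hpow _ hwpos, hB, mul_one_div, mul_one_div,
      div_le_div_iff₀ (by positivity) (by positivity)]
    nlinarith [mul_le_mul_of_nonneg_right hcond (Real.sqrt_nonneg (M*r)),
      Real.sqrt_nonneg (M*r), Real.sqrt_nonneg π]
  have hE2 : CJ * ((2*M*r) ^ (-(3:ℝ)/2)) ≤ CJ * ((M*r) ^ (-(3:ℝ)/2)) := by
    apply mul_le_mul_of_nonneg_left _ hCJ
    rw [hpow _ (by positivity), hpow _ (by positivity)]
    have h1 : Real.sqrt (M*r) ≤ Real.sqrt (2*M*r) := Real.sqrt_le_sqrt (by nlinarith)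
    have h2 : M*r*Real.sqrt (M*r) ≤ 2*M*r*Real.sqrt (2*M*r) :=
      mul_le_mul (by nlinarith) h1 (Real.sqrt_nonneg _) (by positivity)
    exact one_div_le_one_div_of_le (by positivity) h2
  -- the sum of squared cosines is bounded below
  have hsum : δ ≤ Real.cos (M*r - (a+1)*π/2 - π/4) ^ 2
      + Real.cos (2*M*r - (a+1)*π/2 - π/4) ^ 2 := by
    have h1 := hδ (M*r - (a+1)*π/2 - π/4)
    have harg : 2*(M*r - (a+1)*π/2 - π/4) + φ = 2*M*r - (a+1)*π/2 - π/4 := by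
      rw [hφ]; ring
    rw [harg] at h1
    exact h1
  have hcase : s ≤ |Real.cos (M*r - (a+1)*π/2 - π/4)| ∨
      s ≤ |Real.cos (2*M*r - (a+1)*π/2 - π/4)| := by
    by_contra hc
    push_neg at hc
    obtain ⟨h1, h2⟩ := hc
    have e1 : Real.cos (M*r - (a+1)*π/2 - π/4) ^ 2 < δ/2 := by
      rw [← sq_abs, ← hs2]
      exact pow_lt_pow_left₀ h1 (abs_nonneg _) two_ne_zero
    have e2 : Real.cos (2*M*r - (a+1)*π/2 - π/4) ^ 2 < δ/2 := by
      rw [← sq_abs, ← hs2]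
      exact pow_lt_pow_left₀ h2 (abs_nonneg _) two_ne_zero
    linarith
  have final : ∀ u : ℝ, W0 ≤ u → B ≤ Real.sqrt (2/(π*u)) →
      CJ * u ^ (-(3:ℝ)/2) ≤ s/2*B → s ≤ |Real.cos (u - (a+1)*π/2 - π/4)| →
      δ/(8*π*r)/M ≤ |J u|^2 := by
    intro u hu hBu hEu hcu
    have hk := key u hu
    have h1 : B*s ≤ Real.sqrt (2/(π*u)) * |Real.cos (u - (a+1)*π/2 - π/4)| :=
      mul_le_mul hBu hcu hs.le (Real.sqrt_nonneg _)
    have hring : s/2*B = B*s - s/2*B := by ring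
    have h2 : s/2*B ≤ |J u| := by linarith
    have h3 : (s/2*B)^2 ≤ |J u|^2 := pow_le_pow_left₀ (by positivity) h2 2
    have h4 : (s/2*B)^2 = δ/(8*π*r)/M := by
      have h5 : (s/2*B)^2 = s^2*B^2/4 := by ring
      rw [h5, hs2, hBsq]
      field_simp
      ring_nf
    linarith
  rcases hcase with h | h
  · have h1 := final (M*r) hwW0 hA1 hE1 h
    have h2 : (0:ℝ) ≤ |J (2*M*r)|^2 := by positivity
    linarith
  · have h1 := final (2*M*r) h2wW0 (hA2 ▸ le_refl B) (le_trans hE2 hE1) h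
    have h2 : (0:ℝ) ≤ |J (M*r)|^2 := by positivity
    linarith
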